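/- Let β ∈ ℝ^{r×r} have characteristic polynomial equal to the minimal polynomial of S ∈ ℝ^{q×q}, and let σ ∈ ℝ^r be such that (β, σ) is controllable. Then for every eigenvalue λ of S, λ is an eigenvalue of β, and the pair (G₁, G₂) with G₁ = blockdiag(β,…,β) (p copies) and G₂ = blockdiag(σ,…,σ) (p copies) satisfies: for every λ ∈ σ(S), rank(G₁ − λI) = pr − p and the matrix [G₁ − λI, G₂] ∈ ℝ^{pr×(pr+p)} has full row rank pr. -/

import Mathlib

/-!
Eigenvalues of `S` are roots of its minimal polynomial, which divides the characteristic
polynomial of `β`. The rank statements are the Popov–Belevitch–Hautus test for the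
single-input pair `(β, σ)`: a left eigenvector `w` of `β` with `w ⬝ᵥ σ = 0` annihilates every
column `β ^ k *ᵥ σ` of the controllability matrix, so it vanishes. Hence `[β - μ, σ]` has full row
rank `r` for every `μ`, and at an eigenvalue the singular `β - μ` loses exactly one unit of rank,
since appending the single column `σ` restores rank `r`. The block-diagonal matrices are Kronecker
products `1 ⊗ₖ X`, whose rank is `p * rank X`.
-/

open Matrix Polynomial
open scoped Kronecker

theorem spectrum.eval_eq_zero_of_aeval_eq_zero {𝕜 A : Type*} [Field 𝕜] [Ring A] [Algebra 𝕜 A]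
    {a : A} {p : 𝕜[X]} (hp : aeval a p = 0) {μ : 𝕜} (hμ : μ ∈ spectrum 𝕜 a) :
    p.eval μ = 0 := by
  have hmem := spectrum.subset_polynomial_aeval a p ⟨μ, hμ, rfl⟩
  cases subsingleton_or_nontrivial A
  · simp [spectrum.of_subsingleton] at hμ
  · rwa [hp, spectrum.zero_eq, Set.mem_singleton_iff] at hmem

namespace Matrix

theorem mem_spectrum_map_of_minpoly_dvd_charpoly {K L n m : Type*} [Field K] [Field L]
    [Algebra K L] [Fintype n] [DecidableEq n] [Fintype m] [DecidableEq m]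
    {S : Matrix n n K} {B : Matrix m m K} (h : minpoly K S ∣ B.charpoly) {μ : L}
    (hμ : μ ∈ spectrum L (S.map (algebraMap K L))) :
    μ ∈ spectrum L (B.map (algebraMap K L)) := by
  have hS : aeval (S.map (algebraMap K L)) ((minpoly K S).map (algebraMap K L)) = 0 := by
    have hmap : S.map (algebraMap K L) = (Algebra.ofId K L).mapMatrix S := rfl
    rw [aeval_map_algebraMap, hmap, aeval_algHom_apply, minpoly.aeval, map_zero]
  rw [mem_spectrum_iff_isRoot_charpoly, charpoly_map]
  exact IsRoot.dvd (spectrum.eval_eq_zero_of_aeval_eq_zero hS hμ) (Polynomial.map_dvd _ h)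

theorem isUnit_of_rank_eq_card {K n : Type*} [Field K] [Fintype n] [DecidableEq n]
    {A : Matrix n n K} (h : A.rank = Fintype.card n) : IsUnit A := by
  refine mulVec_surjective_iff_isUnit.mp (LinearMap.range_eq_top (f := A.mulVecLin).mp ?_)
  exact Submodule.eq_top_of_finrank_eq (by rw [Module.finrank_fintype_fun_eq_card]; exact h)

theorem rank_fromCols_le {K m n₁ n₂ : Type*} [Field K] [Fintype n₁] [Fintype n₂]
    (A : Matrix m n₁ K) (B : Matrix m n₂ K) :
    (fromCols A B).rank ≤ A.rank + B.rank := by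
  have hrange : LinearMap.range (fromCols A B).mulVecLin ≤
      LinearMap.range A.mulVecLin ⊔ LinearMap.range B.mulVecLin := by
    rintro _ ⟨v, rfl⟩
    rw [mulVecLin_apply, fromCols_mulVec]
    exact Submodule.add_mem_sup ⟨_, rfl⟩ ⟨_, rfl⟩
  exact (Submodule.finrank_mono hrange).trans (Submodule.finrank_add_le_finrank_add_finrank _ _)

theorem vecMul_pow_of_vecMul_eq_smul {R n : Type*} [CommSemiring R] [Fintype n]
    [DecidableEq n] {B : Matrix n n R} {μ : R} {w : n → R} (h : w ᵥ* B = μ • w) (k : ℕ) :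
    w ᵥ* B ^ k = μ ^ k • w := by
  induction k with
  | zero => simp
  | succ k ih => rw [pow_succ, ← vecMul_vecMul, ih, smul_vecMul, h, smul_smul, ← pow_succ]

section Kronecker

theorem one_kronecker_mulVec {R ι m n : Type*} [Semiring R] [Fintype ι] [DecidableEq ι]
    [Fintype n] (X : Matrix m n R) (v : ι × n → R) (i : ι) (a : m) :
    ((1 : Matrix ι ι R) ⊗ₖ X *ᵥ v) (i, a) = (X *ᵥ fun b => v (i, b)) a := by
  simp [mulVec, dotProduct, one_apply, Fintype.sum_prod_type, ite_mul]

variable {K ι m n : Type*} [Field K] [Fintype ι] [DecidableEq ι] [Fintype n]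

theorem finrank_ker_mulVecLin_one_kronecker (X : Matrix m n K) :
    Module.finrank K (LinearMap.ker ((1 : Matrix ι ι K) ⊗ₖ X).mulVecLin) =
      Fintype.card ι * Module.finrank K (LinearMap.ker X.mulVecLin) := by
  have hmem (v : ι × n → K) : v ∈ LinearMap.ker ((1 : Matrix ι ι K) ⊗ₖ X).mulVecLin ↔
      ∀ i, (fun b => v (i, b)) ∈ LinearMap.ker X.mulVecLin := by
    simp only [LinearMap.mem_ker, mulVecLin_apply, funext_iff, Prod.forall, one_kronecker_mulVec,
      Pi.zero_apply]
  let e : LinearMap.ker ((1 : Matrix ι ι K) ⊗ₖ X).mulVecLin ≃ₗ[K]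
      (ι → LinearMap.ker X.mulVecLin) :=
    { toFun v i := ⟨fun b => v.1 (i, b), (hmem v.1).mp v.2 i⟩
      invFun w := ⟨fun x => (w x.1).1 x.2, (hmem _).mpr fun i => (w i).2⟩
      map_add' _ _ := rfl
      map_smul' _ _ := rfl
      left_inv _ := rfl
      right_inv _ := rfl }
  rw [e.finrank_eq, Module.finrank_pi_fintype, Finset.sum_const, smul_eq_mul, Finset.card_univ]

theorem rank_one_kronecker (X : Matrix m n K) :
    ((1 : Matrix ι ι K) ⊗ₖ X).rank = Fintype.card ι * X.rank := by
  have hX := LinearMap.finrank_range_add_finrank_ker X.mulVecLin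
  have h1X := LinearMap.finrank_range_add_finrank_ker ((1 : Matrix ι ι K) ⊗ₖ X).mulVecLin
  rw [Module.finrank_fintype_fun_eq_card] at hX
  rw [finrank_ker_mulVecLin_one_kronecker, Module.finrank_fintype_fun_eq_card,
    Fintype.card_prod, ← hX, Nat.mul_add] at h1X
  exact Nat.add_right_cancel h1X

end Kronecker

section Controllability

variable {R : Type*} [CommRing R] {r : ℕ}

def controllabilityMatrix (B : Matrix (Fin r) (Fin r) R) (s : Fin r → R) :
    Matrix (Fin r) (Fin r) R :=
  of fun a b => (B ^ (b : ℕ) *ᵥ s) a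

theorem controllabilityMatrix_map {S : Type*} [CommRing S] (f : R →+* S)
    (B : Matrix (Fin r) (Fin r) R) (s : Fin r → R) :
    controllabilityMatrix (B.map f) (f ∘ s) = (controllabilityMatrix B s).map f := by
  ext a b
  rw [controllabilityMatrix, controllabilityMatrix, of_apply, map_apply, of_apply,
    RingHom.map_mulVec, ← RingHom.mapMatrix_apply, ← RingHom.mapMatrix_apply, map_pow]

theorem vecMul_controllabilityMatrix_eq_zero {B : Matrix (Fin r) (Fin r) R} {s w : Fin r → R}
    {μ : R} (hB : w ᵥ* B = μ • w) (hs : w ⬝ᵥ s = 0) : w ᵥ* controllabilityMatrix B s = 0 := by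
  ext b
  change w ⬝ᵥ (B ^ (b : ℕ) *ᵥ s) = 0
  rw [dotProduct_mulVec, vecMul_pow_of_vecMul_eq_smul hB, smul_dotProduct, hs, smul_zero]

variable {K : Type*} [Field K] {B : Matrix (Fin r) (Fin r) K} {s : Fin r → K}

theorem rank_fromCols_sub_smul_one (hK : IsUnit (controllabilityMatrix B s)) (μ : K) :
    (fromCols (B - μ • 1) (replicateCol Unit s)).rank = r := by
  set M := fromCols (B - μ • 1) (replicateCol Unit s)
  suffices hinj : Function.Injective M.vecMul by
    simpa using (vecMul_injective_iff.mp hinj).rank_matrix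
  refine (injective_iff_map_eq_zero M.vecMulLinear).mpr fun w hw => ?_
  rw [vecMulLinear_apply, vecMul_fromCols] at hw
  have hB : w ᵥ* B = μ • w := by
    have h : w ᵥ* (B - μ • 1) = 0 := funext fun a => congrFun hw (Sum.inl a)
    rwa [vecMul_sub, vecMul_smul, vecMul_one, sub_eq_zero] at h
  have hs : w ⬝ᵥ s = 0 := congrFun hw (Sum.inr ())
  refine vecMul_injective_iff_isUnit.mpr hK ?_
  simp only [vecMul_controllabilityMatrix_eq_zero hB hs, zero_vecMul]

theorem rank_sub_smul_one_of_mem_spectrum (hK : IsUnit (controllabilityMatrix B s)) {μ : K}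
    (hμ : μ ∈ spectrum K B) : (B - μ • 1).rank = r - 1 := by
  have hge : r ≤ (B - μ • 1).rank + 1 :=
    calc r = (fromCols (B - μ • 1) (replicateCol Unit s)).rank :=
          (rank_fromCols_sub_smul_one hK μ).symm
      _ ≤ (B - μ • 1).rank + (replicateCol Unit s).rank := rank_fromCols_le _ _
      _ ≤ (B - μ • 1).rank + 1 := by
          gcongr
          simpa using rank_le_card_width (replicateCol Unit s)
  have hne : (B - μ • 1).rank ≠ r := by
    intro h
    rw [spectrum.mem_iff, IsUnit.sub_iff, Algebra.algebraMap_eq_smul_one] at hμ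
    exact hμ (isUnit_of_rank_eq_card (by simpa using h))
  have hle := rank_le_width (B - μ • 1)
  omega

end Controllability

end Matrix

theorem internal_model_spectral_rank_properties {q r p : ℕ}
    (S : Matrix (Fin q) (Fin q) ℝ)
    (β : Matrix (Fin r) (Fin r) ℝ) (σv : Fin r → ℝ)
    (hβ : β.charpoly = minpoly ℝ S)
    (hctrb : (Matrix.of fun (a : Fin r) (b : Fin r) => (β ^ (b : ℕ)).mulVec σv a).rank = r) :
    let G₁ : Matrix (Fin p × Fin r) (Fin p × Fin r) ℝ :=
      fun x y => if x.1 = y.1 then β x.2 y.2 else 0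
    let G₂ : Matrix (Fin p × Fin r) (Fin p) ℝ :=
      fun x j => if x.1 = j then σv x.2 else 0
    ∀ μ ∈ spectrum ℂ (S.map Complex.ofReal),
      μ ∈ spectrum ℂ (β.map Complex.ofReal) ∧
      (G₁.map Complex.ofReal - μ • 1).rank = p * r - p ∧
      (Matrix.fromCols (G₁.map Complex.ofReal - μ • 1) (G₂.map Complex.ofReal)).rank
        = p * r := by
  intro G₁ G₂ μ hμ
  have hK : IsUnit (controllabilityMatrix (β.map Complex.ofReal) (Complex.ofReal ∘ σv)) := by
    have h : IsUnit (controllabilityMatrix β σv) :=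
      isUnit_of_rank_eq_card (by rw [Fintype.card_fin]; exact hctrb)
    have hmap := h.map Complex.ofRealHom.mapMatrix
    rwa [RingHom.mapMatrix_apply, ← controllabilityMatrix_map] at hmap
  have hμβ : μ ∈ spectrum ℂ (β.map Complex.ofReal) :=
    mem_spectrum_map_of_minpoly_dvd_charpoly hβ.symm.dvd hμ
  have hG₁ : G₁.map Complex.ofReal - μ • 1 =
      (1 : Matrix (Fin p) (Fin p) ℂ) ⊗ₖ (β.map Complex.ofReal - μ • 1) := by
    ext ⟨i, a⟩ ⟨j, b⟩
    rw [Matrix.sub_apply, Matrix.map_apply, Matrix.smul_apply, kronecker_apply]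
    by_cases hij : i = j <;> by_cases hab : a = b <;> simp [G₁, one_apply, hij, hab]
  -- `G₂` is `1 ⊗ₖ σ` with its column index `Fin p × Unit` identified with `Fin p`.
  have hcols : fromCols (G₁.map Complex.ofReal - μ • 1) (G₂.map Complex.ofReal) =
      ((1 : Matrix (Fin p) (Fin p) ℂ) ⊗ₖ fromCols (β.map Complex.ofReal - μ • 1)
        (replicateCol Unit (Complex.ofReal ∘ σv))).submatrix (Equiv.refl _)
        ((Equiv.sumCongr (Equiv.refl _) (Equiv.prodPUnit _).symm).trans
          (Equiv.prodSumDistrib _ _ _).symm) := by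
    rw [hG₁]
    ext ⟨i, a⟩ (⟨j, b⟩ | j)
    all_goals
      simp only [fromCols_apply_inl, fromCols_apply_inr, submatrix_apply, kronecker_apply,
        Matrix.map_apply]
      by_cases hij : i = j <;> simp [G₂, one_apply, hij]
  refine ⟨hμβ, ?_, ?_⟩
  · rw [hG₁, rank_one_kronecker, rank_sub_smul_one_of_mem_spectrum hK hμβ]
    simp [Nat.mul_sub_one]
  · rw [hcols, rank_submatrix, rank_one_kronecker, rank_fromCols_sub_smul_one hK]
    simp
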